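/- Let (X,U,V) : ℝ → ℝ³ be a differentiable solution of X' = sin(X)U − cos(X)V, U' = cos X, V' = sin X with initial condition (X₀,U₀,V₀) satisfying sin(X₀)·U₀ − cos(X₀)·V₀ = 0. Then for all t ∈ ℝ: X(t) = X₀, U(t) = U₀ + t·cos(X₀), and V(t) = V₀ + t·sin(X₀). -/

import Mathlib

/-!
Along a solution, the drift `W = sin(X)·U − cos(X)·V` satisfies the scalar linear equation
`W' = (cos(X)·U + sin(X)·V)·W`, so `W(t) = W(0)·exp(∫₀ᵗ (cos(X)·U + sin(X)·V))`. Hence `W ≡ 0`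
when `W(0) = 0`; then `X' ≡ 0`, so `X` is constant and `U`, `V` have constant derivatives.
-/

open Real

theorem eq_add_mul_of_hasDerivAt_const {f : ℝ → ℝ} {c : ℝ} (hf : ∀ t, HasDerivAt f c t) (t : ℝ) :
    f t = f 0 + t * c := by
  have hg : ∀ s, HasDerivAt (fun r => f r - r * c) 0 s := fun s => by
    simpa using (hf s).fun_sub ((hasDerivAt_id s).mul_const c)
  have := is_const_of_deriv_eq_zero (fun s => (hg s).differentiableAt) (fun s => (hg s).deriv) t 0
  simp only [zero_mul, sub_zero] at this
  linarith

theorem eq_mul_exp_integral_of_hasDerivAt_mul {w a : ℝ → ℝ} (ha : Continuous a)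
    (hw : ∀ t, HasDerivAt w (a t * w t) t) (t : ℝ) :
    w t = w 0 * exp (∫ s in (0 : ℝ)..t, a s) := by
  set A : ℝ → ℝ := fun t => ∫ s in (0 : ℝ)..t, a s
  have hA : ∀ t, HasDerivAt A (a t) t := fun t => (ha.integral_hasStrictDerivAt 0 t).hasDerivAt
  have hg : ∀ t, HasDerivAt (fun s => w s * exp (-A s)) 0 t := fun t =>
    ((hw t).fun_mul (hA t).fun_neg.exp).congr_deriv (by ring)
  have hconst := is_const_of_deriv_eq_zero (fun s => (hg s).differentiableAt)
    (fun s => (hg s).deriv) t 0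
  have hA0 : A 0 = 0 := intervalIntegral.integral_same
  rw [hA0, neg_zero, exp_zero, mul_one] at hconst
  rw [← hconst, mul_assoc, ← exp_add, neg_add_cancel, exp_zero, mul_one]

section Solution

variable {X U V : ℝ → ℝ}
  (hX : ∀ t, HasDerivAt X (sin (X t) * U t - cos (X t) * V t) t)
  (hU : ∀ t, HasDerivAt U (cos (X t)) t)
  (hV : ∀ t, HasDerivAt V (sin (X t)) t)

include hX hU hV

theorem hasDerivAt_drift (t : ℝ) :
    HasDerivAt (fun s => sin (X s) * U s - cos (X s) * V s)
      ((cos (X t) * U t + sin (X t) * V t) * (sin (X t) * U t - cos (X t) * V t)) t :=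
  (((hX t).sin.fun_mul (hU t)).fun_sub ((hX t).cos.fun_mul (hV t))).congr_deriv (by ring)

theorem drift_eq_zero (h0 : sin (X 0) * U 0 - cos (X 0) * V 0 = 0) (t : ℝ) :
    sin (X t) * U t - cos (X t) * V t = 0 := by
  have hXc : Continuous X := continuous_iff_continuousAt.2 fun t => (hX t).continuousAt
  have hUc : Continuous U := continuous_iff_continuousAt.2 fun t => (hU t).continuousAt
  have hVc : Continuous V := continuous_iff_continuousAt.2 fun t => (hV t).continuousAt
  have ha : Continuous fun s => cos (X s) * U s + sin (X s) * V s := by fun_prop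
  rw [eq_mul_exp_integral_of_hasDerivAt_mul ha (hasDerivAt_drift hX hU hV) t, h0, zero_mul]

end Solution

theorem stmt_1 (X U V : ℝ → ℝ)
    (hX : ∀ t : ℝ, HasDerivAt X (Real.sin (X t) * U t - Real.cos (X t) * V t) t)
    (hU : ∀ t : ℝ, HasDerivAt U (Real.cos (X t)) t)
    (hV : ∀ t : ℝ, HasDerivAt V (Real.sin (X t)) t)
    (h0 : Real.sin (X 0) * U 0 - Real.cos (X 0) * V 0 = 0) :
    ∀ t : ℝ, X t = X 0 ∧ U t = U 0 + t * Real.cos (X 0) ∧ V t = V 0 + t * Real.sin (X 0) := by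
  have hXconst : ∀ t, X t = X 0 := by
    have hX' : ∀ t, HasDerivAt X 0 t := fun t => by
      simpa only [drift_eq_zero hX hU hV h0 t] using hX t
    simpa using eq_add_mul_of_hasDerivAt_const hX'
  intro t
  refine ⟨hXconst t, eq_add_mul_of_hasDerivAt_const (fun s => ?_) t,
    eq_add_mul_of_hasDerivAt_const (fun s => ?_) t⟩
  · simpa only [hXconst s] using hU s
  · simpa only [hXconst s] using hV s
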